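/- Let A : ℕ → S be a sequence such that for every N ∈ ℕ, writing t = A[N]: (i) n(t,N) = ⌊f(t)·N⌋ or ⌊f(t)·(N+1)⌋ = ⌊f(t)·N⌋ + 1; and (ii) for every integer M with N + 1 ≤ M < min{L ∈ ℕ : ⌊f(t)·L⌋ ≥ n(t,N) + 1}, one has Σ_{s∈S} max{0, ⌊f(s)·M⌋ − n(s,N)} < M − N. Then |f(s)·N − n(s,N)| ≤ 1 for all s ∈ S and all N ∈ ℕ. -/

import Mathlib

/-!
The integer bounds `⌊f s * N⌋ ≤ n(s,N) ≤ ⌊f s * N⌋ + 1` give the claim.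

The upper bound holds because, by (i), a symbol is only played when it is not ahead of its
quota `⌊f s * N⌋`, or when that quota is about to grow.

For the lower bound, suppose `n(s,M) < ⌊f s * M⌋`, and call a step `k < M` *owed* if the symbol
`A k` played there was still below its quota at time `M`. If all steps `k` in `[Q, M)` are
owed, then every symbol `v` has `n(v,M) - n(v,Q) ≤ max 0 (⌊f v * M⌋ - n(v,Q))`, strictly so
for `v = s`; summing, the backlog `∑ v, max 0 (⌊f v * M⌋ - n(v,Q))` exceeds `M - Q`. For
`Q = 0` this contradicts `∑ v, ⌊f v * M⌋ ≤ M`. Otherwise take `Q = P + 1` least; step `P` is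
not owed, so the quota of `A P` stays at most `n(A P, P)` up to time `M`, and (ii) bounds the
backlog at `P` by `M - P`, which is again a contradiction.
-/

open Finset

/-- The number of occurrences of the symbol `s` among the first `N` terms of `x`. -/
def nOcc {S : Type*} [DecidableEq S] (x : ℕ → S) (s : S) (N : ℕ) : ℕ :=
  ((Finset.range N).filter fun k => x k = s).card

section Occurrences

variable {S : Type*} [DecidableEq S] (A : ℕ → S)

theorem nOcc_eq_count (s : S) (N : ℕ) : nOcc A s N = Nat.count (fun k => A k = s) N :=
  (Nat.count_eq_card_filter_range (fun k => A k = s) N).symm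

@[simp]
theorem nOcc_zero (s : S) : nOcc A s 0 = 0 := by
  simp [nOcc_eq_count]

theorem nOcc_succ (s : S) (N : ℕ) :
    nOcc A s (N + 1) = nOcc A s N + if A N = s then 1 else 0 := by
  simp only [nOcc_eq_count, Nat.count_succ]

theorem nOcc_monotone (s : S) : Monotone (nOcc A s) := by
  rw [show nOcc A s = _ from funext (nOcc_eq_count A s)]
  exact Nat.count_monotone _

theorem sum_nOcc [Fintype S] (N : ℕ) : ∑ s, nOcc A s N = N := by
  have := card_eq_sum_card_fiberwise (s := range N) (t := univ) (f := A) fun _ _ => mem_univ _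
  rw [card_range] at this
  exact this.symm

theorem nOcc_le_max_of_forall_lt {s : S} {c : ℤ} {Q M : ℕ} (hQM : Q ≤ M)
    (h : ∀ k, Q ≤ k → k < M → A k = s → (nOcc A s k : ℤ) < c) :
    (nOcc A s M : ℤ) ≤ max (nOcc A s Q : ℤ) c := by
  induction M, hQM using Nat.le_induction with
  | base => exact le_max_left _ _
  | succ M hQM ih =>
    have ih := ih fun k hk hkM => h k hk (by omega)
    rw [nOcc_succ]
    split_ifs with hs
    · have := h M hQM (by omega) hs
      push_cast
      omega
    · simpa using ih

theorem nOcc_le_add_one_of_monotone {s : S} {g : ℕ → ℤ} (hg : Monotone g) (hg0 : 0 ≤ g 0)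
    (hstep : ∀ N, A N = s → (nOcc A s N : ℤ) = g N ∨ g (N + 1) = g N + 1) (N : ℕ) :
    (nOcc A s N : ℤ) ≤ g N + 1 := by
  induction N with
  | zero =>
    simp only [nOcc_zero, Nat.cast_zero]
    omega
  | succ N ih =>
    have hgN := hg (Nat.le_add_right N 1)
    rw [nOcc_succ]
    split_ifs with hs
    · rcases hstep N hs with h | h <;> push_cast <;> omega
    · push_cast
      omega

variable [Fintype S]

def backlog (c : S → ℤ) (Q : ℕ) : ℤ :=
  ∑ v, max 0 (c v - nOcc A v Q)

theorem backlog_antitone (c : S → ℤ) : Antitone (backlog A c) := fun _ _ hPQ =>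
  sum_le_sum fun v _ => max_le_max le_rfl (by have := nOcc_monotone A v hPQ; omega)

theorem backlog_zero (c : S → ℤ) : backlog A c 0 = ∑ v, max 0 (c v) := by
  simp [backlog]

theorem sub_lt_backlog {c : S → ℤ} {s : S} {Q M : ℕ} (hQM : Q ≤ M)
    (howed : ∀ k, Q ≤ k → k < M → (nOcc A (A k) k : ℤ) < c (A k))
    (hs : (nOcc A s M : ℤ) < c s) :
    (M : ℤ) - Q < backlog A c Q := by
  have hsum : ∑ v, ((nOcc A v M : ℤ) - nOcc A v Q) = M - Q := by
    rw [sum_sub_distrib]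
    exact_mod_cast congr_arg₂ (fun a b : ℕ => (a : ℤ) - b) (sum_nOcc A M) (sum_nOcc A Q)
  rw [← hsum]
  refine sum_lt_sum (fun v _ => ?_) ⟨s, mem_univ _, ?_⟩
  · have := nOcc_le_max_of_forall_lt A (s := v) (c := c v) hQM
      fun k hk hkM hv => hv ▸ howed k hk hkM
    omega
  · have := nOcc_monotone A s hQM
    omega

end Occurrences

theorem sum_floor_mul_le {S : Type*} [Fintype S] {f : S → ℝ} (hsum : ∑ s, f s = 1) (x : ℝ) :
    ((∑ s, ⌊f s * x⌋ : ℤ) : ℝ) ≤ x := by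
  push_cast
  calc ∑ s, (⌊f s * x⌋ : ℝ) ≤ ∑ s, f s * x := sum_le_sum fun s _ => Int.floor_le _
    _ = x := by rw [← sum_mul, hsum, one_mul]

/-- Positivity of `a` makes the set nonempty, so its `sInf` is not the junk value `0`. -/
theorem lt_sInf_floor_mul {a : ℝ} (ha : 0 < a) {n : ℤ} {M : ℕ} (h : ⌊a * M⌋ ≤ n) :
    M < sInf {L : ℕ | n + 1 ≤ ⌊a * L⌋} := by
  have hne : {L : ℕ | n + 1 ≤ ⌊a * L⌋}.Nonempty := by
    obtain ⟨L, hL⟩ := exists_nat_gt ((n + 1) / a)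
    refine ⟨L, Int.le_floor.2 ?_⟩
    push_cast
    exact (div_le_iff₀' ha).1 hL.le
  by_contra! hle
  have hmem : n + 1 ≤ ⌊a * _⌋ := Nat.sInf_mem hne
  have := Int.floor_le_floor (mul_le_mul_of_nonneg_left (Nat.cast_le.2 hle) ha.le)
  omega

theorem floor_mul_le_nOcc {S : Type*} [Fintype S] [DecidableEq S]
    (f : S → ℝ) (hf0 : ∀ s, 0 < f s) (hsum : ∑ s, f s = 1) (A : ℕ → S)
    (hA2 : ∀ N M : ℕ, N + 1 ≤ M →
      M < sInf {L : ℕ | (nOcc A (A N) N : ℤ) + 1 ≤ ⌊f (A N) * L⌋} →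
      backlog A (fun s => ⌊f s * M⌋) N < M - N)
    (s : S) (M : ℕ) : ⌊f s * M⌋ ≤ (nOcc A s M : ℤ) := by
  by_contra! hs
  set c : S → ℤ := fun v => ⌊f v * M⌋
  have hex : ∃ Q, ∀ k, Q ≤ k → k < M → (nOcc A (A k) k : ℤ) < c (A k) :=
    ⟨M, fun k hk hkM => by omega⟩
  have hQM : Nat.find hex ≤ M := Nat.find_min' hex fun k hk hkM => by omega
  have hlt := sub_lt_backlog A hQM (Nat.find_spec hex) hs
  rcases hQ : Nat.find hex with _ | P
  · have hc : ∀ v, max 0 (c v) = c v := fun v =>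
      max_eq_right (Int.floor_nonneg.2 (by have := hf0 v; positivity))
    have hle : ∑ v, c v ≤ (M : ℤ) := by exact_mod_cast sum_floor_mul_le hsum M
    simp only [hQ, backlog_zero, hc] at hlt
    omega
  · have hPM : P + 1 ≤ M := hQ ▸ hQM
    have hP : c (A P) ≤ nOcc A (A P) P := by
      have hnot := Nat.find_min hex (m := P) (by omega)
      push Not at hnot
      obtain ⟨k, hPk, hkM, hk⟩ := hnot
      obtain rfl | hPk := hPk.eq_or_lt
      · exact hk
      · exact absurd (Nat.find_spec hex k (by omega) hkM) (not_lt.2 hk)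
    have hbound : backlog A c P < M - P := hA2 P M hPM (lt_sInf_floor_mul (hf0 _) hP)
    have hanti := backlog_antitone A c (Nat.le_add_right P 1)
    rw [hQ] at hlt
    push_cast at hlt
    omega

theorem stmt_7_general {S : Type*} [Fintype S] [DecidableEq S]
    (f : S → ℝ) (hf0 : ∀ s, 0 < f s)
    (hsum : ∑ s, f s = 1)
    (A : ℕ → S)
    (hA1 : ∀ N : ℕ,
      (nOcc A (A N) N : ℤ) = ⌊f (A N) * (N : ℝ)⌋ ∨
        ⌊f (A N) * ((N : ℝ) + 1)⌋ = ⌊f (A N) * (N : ℝ)⌋ + 1)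
    (hA2 : ∀ N : ℕ, ∀ M : ℕ, N + 1 ≤ M →
      M < sInf {L : ℕ | (nOcc A (A N) N : ℤ) + 1 ≤ ⌊f (A N) * (L : ℝ)⌋} →
      ∑ s, max 0 (⌊f s * (M : ℝ)⌋ - (nOcc A s N : ℤ)) < (M : ℤ) - (N : ℤ)) :
    ∀ (s : S) (N : ℕ), |f s * (N : ℝ) - (nOcc A s N : ℝ)| ≤ 1 := by
  intro s N
  have hmono : Monotone fun N : ℕ => ⌊f s * N⌋ :=
    Int.floor_mono.comp ((Nat.mono_cast).const_mul (hf0 s).le)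
  have hlow : (⌊f s * N⌋ : ℝ) ≤ nOcc A s N := by
    exact_mod_cast floor_mul_le_nOcc f hf0 hsum A hA2 s N
  have hup : (nOcc A s N : ℝ) ≤ ⌊f s * N⌋ + 1 := by
    exact_mod_cast nOcc_le_add_one_of_monotone A hmono (by simp)
      (fun N hN => by simpa [hN] using hA1 N) N
  have := Int.floor_le (f s * N)
  have := Int.lt_floor_add_one (f s * N)
  rw [abs_le]
  constructor <;> linarith

theorem stmt_7 {S : Type*} [Fintype S] [DecidableEq S] [Nonempty S]
    (f : S → ℝ) (hf0 : ∀ s, 0 < f s) (hf1 : ∀ s, f s ≤ 1)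
    (hsum : ∑ s, f s = 1)
    (A : ℕ → S)
    (hA1 : ∀ N : ℕ,
      (nOcc A (A N) N : ℤ) = ⌊f (A N) * (N : ℝ)⌋ ∨
        ⌊f (A N) * ((N : ℝ) + 1)⌋ = ⌊f (A N) * (N : ℝ)⌋ + 1)
    (hA2 : ∀ N : ℕ, ∀ M : ℕ, N + 1 ≤ M →
      M < sInf {L : ℕ | (nOcc A (A N) N : ℤ) + 1 ≤ ⌊f (A N) * (L : ℝ)⌋} →
      ∑ s, max 0 (⌊f s * (M : ℝ)⌋ - (nOcc A s N : ℤ)) < (M : ℤ) - (N : ℤ)) :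
    ∀ (s : S) (N : ℕ), |f s * (N : ℝ) - (nOcc A s N : ℝ)| ≤ 1 :=
  stmt_7_general f hf0 hsum A hA1 hA2
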